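/- The last primal iterate of Algorithm (DG) converges sublinearly at rate O(1/√k): for all k ≥ 1, ‖u^k − u*‖ ≤ √(8 L_G R_d² / (k σ_f)), dist_K(G u^k + g) ≤ 3 L_G R_d / √k, and |f(u^k) − f*| ≤ (6 R_d + 3 ‖x^0‖) L_G R_d / √k. -/

import Mathlib

/-!
The dual function `d` is concave with `‖G‖²/σ_f`-Lipschitz gradient `-G u(x) - g`, so (DG) is
projected gradient ascent on `d` over `K*`, and the standard three-point argument gives the
`O(1/k)` dual gap `f* - d(x^k) ≤ L_G R_d² / (2k)` together with Fejér monotonicity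
`‖x^k - x*‖ ≤ R_d`. Strong convexity of the Lagrangian turns the dual gap into
`σ_f/2 ‖u^k - u*‖² ≤ f* - d(x^k)`, whence the `O(1/√k)` rate for the primal iterate; the
constraint violation and the objective error are then controlled by `‖G‖ ‖u^k - u*‖`, the latter
with the multipliers `‖x^k‖, ‖x*‖ ≤ ‖x^0‖ + 2 R_d`.
-/

open Filter Topology
open scoped RealInnerProductSpace

lemma le_sqrt_of_half_mul_sq_le {σ Λ R e k : ℝ} (hσ : 0 < σ) (hk : 0 < k) (hΛ : 0 ≤ Λ)
    (h : σ / 2 * e ^ 2 ≤ Λ * R ^ 2 / (2 * k)) : e ≤ √(8 * Λ * R ^ 2 / (k * σ)) := by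
  refine Real.le_sqrt_of_sq_le ?_
  have := (le_div_iff₀ (by positivity)).1 h
  rw [le_div_iff₀ (by positivity)]
  nlinarith [mul_nonneg hΛ (sq_nonneg R)]

lemma mul_le_div_sqrt_of_half_mul_sq_le {σ Λ Γ R e k : ℝ} (hσ : 0 < σ) (hk : 0 < k)
    (hΓ : Γ ^ 2 / σ ≤ Λ) (hΓ0 : 0 ≤ Γ) (he : 0 ≤ e) (hR : 0 ≤ R)
    (h : σ / 2 * e ^ 2 ≤ Λ * R ^ 2 / (2 * k)) : Γ * e ≤ Λ * R / √k := by
  have hΛ : 0 ≤ Λ := (div_nonneg (sq_nonneg Γ) hσ.le).trans hΓ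
  have h' : σ * e ^ 2 ≤ Λ * R ^ 2 / k := by
    rw [show Λ * R ^ 2 / (2 * k) = Λ * R ^ 2 / k / 2 by ring] at h
    linarith
  rw [← pow_le_pow_iff_left₀ (by positivity) (by positivity) two_ne_zero, div_pow,
    Real.sq_sqrt hk.le, mul_pow]
  calc Γ ^ 2 * e ^ 2 ≤ (Λ * σ) * e ^ 2 :=
        mul_le_mul_of_nonneg_right ((div_le_iff₀ hσ).1 hΓ) (sq_nonneg e)
    _ = Λ * (σ * e ^ 2) := by ring
    _ ≤ Λ * (Λ * R ^ 2 / k) := by gcongr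
    _ = (Λ * R) ^ 2 / k := by ring

section InnerProductSpace

variable {E : Type*} [NormedAddCommGroup E] [InnerProductSpace ℝ E]

lemma StrongConvexOn.add_sq_norm_sub_le_of_isMinOn {s : Set E} {σ : ℝ} {φ : E → ℝ} {m u : E}
    (hφ : StrongConvexOn s σ φ) (hm : IsMinOn φ s m) (hms : m ∈ s) (hu : u ∈ s) :
    φ m + σ / 2 * ‖u - m‖ ^ 2 ≤ φ u := by
  set c := σ / 2 * ‖u - m‖ ^ 2 with hc
  have hstep : ∀ t ∈ Set.Ioo (0 : ℝ) 1, (1 - t) * c ≤ φ u - φ m := by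
    rintro t ⟨ht0, ht1⟩
    have hconv := hφ.2 hu hms ht0.le (sub_nonneg.2 ht1.le) (add_sub_cancel t 1)
    have hmin : φ m ≤ φ (t • u + (1 - t) • m) :=
      hm (hφ.1 hu hms ht0.le (sub_nonneg.2 ht1.le) (add_sub_cancel t 1))
    simp only [smul_eq_mul] at hconv
    have : t * ((1 - t) * c) ≤ t * (φ u - φ m) := by rw [hc]; linear_combination hconv + hmin
    exact le_of_mul_le_mul_left this ht0
  have hlim : Tendsto (fun t : ℝ => (1 - t) * c) (𝓝[>] 0) (𝓝 c) := by
    have : Tendsto (fun t : ℝ => (1 - t) * c) (𝓝 0) (𝓝 ((1 - 0) * c)) :=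
      (Continuous.tendsto (by fun_prop) 0)
    simpa using this.mono_left nhdsWithin_le_nhds
  have := le_of_tendsto hlim (eventually_of_mem (Ioo_mem_nhdsGT one_pos) hstep)
  linarith

lemma real_inner_sub_nonpos_of_forall_norm_sub_le {C : Set E} (hC : Convex ℝ C) {z q w : E}
    (hq : q ∈ C) (hmin : ∀ w ∈ C, ‖z - q‖ ≤ ‖z - w‖) (hw : w ∈ C) : ⟪z - q, w - q⟫ ≤ 0 := by
  have : Nonempty C := ⟨⟨q, hq⟩⟩
  refine (norm_eq_iInf_iff_real_inner_le_zero hC hq).1 (le_antisymm ?_ ?_) w hw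
  · exact le_ciInf fun w => hmin w w.2
  · exact ciInf_le ⟨0, by rintro _ ⟨w, rfl⟩; exact norm_nonneg _⟩ (⟨q, hq⟩ : C)

end InnerProductSpace

section ProjectedGradientAscent

variable {F : Type*} [NormedAddCommGroup F] [InnerProductSpace ℝ F]
  {φ : F → ℝ} {grad : F → F} {C : Set F} {proj : F → F} {L Λ : ℝ}

lemma projGradAscent_step (hC : Convex ℝ C)
    (hproj : ∀ z, proj z ∈ C ∧ ∀ w ∈ C, ‖z - proj z‖ ≤ ‖z - w‖)
    (hconc : ∀ a b, φ b ≤ φ a + ⟪grad a, b - a⟫)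
    (hsmooth : ∀ a b, φ a + ⟪grad a, b - a⟫ - L / 2 * ‖b - a‖ ^ 2 ≤ φ b)
    {a : ℝ} (ha : 0 ≤ a) (haL : a * L ≤ 1) (y : F) {z : F} (hz : z ∈ C) :
    2 * a * (φ z - φ (proj (y + a • grad y)))
      ≤ ‖z - y‖ ^ 2 - ‖z - proj (y + a • grad y)‖ ^ 2 := by
  set y' := proj (y + a • grad y)
  have hφ : φ z - φ y' ≤ ⟪grad y, z - y'⟫ + L / 2 * ‖y' - y‖ ^ 2 := by
    have h₁ := hconc y z
    have h₂ := hsmooth y y'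
    simp only [inner_sub_right] at h₁ h₂ ⊢
    linarith
  have hvi : a * ⟪grad y, z - y'⟫ ≤ ⟪y' - y, z - y'⟫ := by
    have := real_inner_sub_nonpos_of_forall_norm_sub_le hC (hproj (y + a • grad y)).1
      (hproj (y + a • grad y)).2 hz
    rw [show y + a • grad y - y' = a • grad y - (y' - y) by abel, inner_sub_left,
      real_inner_smul_left] at this
    linarith
  have hnorm : ‖z - y‖ ^ 2 - ‖z - y'‖ ^ 2 = 2 * ⟪y' - y, z - y'⟫ + ‖y' - y‖ ^ 2 := by
    rw [show z - y = (z - y') + (y' - y) by abel, norm_add_sq_real, real_inner_comm]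
    ring
  calc 2 * a * (φ z - φ y') ≤ 2 * a * (⟪grad y, z - y'⟫ + L / 2 * ‖y' - y‖ ^ 2) := by gcongr
    _ = 2 * (a * ⟪grad y, z - y'⟫) + a * L * ‖y' - y‖ ^ 2 := by ring
    _ ≤ 2 * ⟪y' - y, z - y'⟫ + 1 * ‖y' - y‖ ^ 2 := by gcongr
    _ = ‖z - y‖ ^ 2 - ‖z - y'‖ ^ 2 := by rw [hnorm, one_mul]

structure IsProjGradAscent (φ : F → ℝ) (grad : F → F) (L Λ : ℝ) (C : Set F) (proj : F → F)
    (α : ℕ → ℝ) (x : ℕ → F) : Prop where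
  convex : Convex ℝ C
  proj_spec : ∀ z, proj z ∈ C ∧ ∀ w ∈ C, ‖z - proj z‖ ≤ ‖z - w‖
  le_add_inner : ∀ a b, φ b ≤ φ a + ⟪grad a, b - a⟫
  add_inner_sub_le : ∀ a b, φ a + ⟪grad a, b - a⟫ - L / 2 * ‖b - a‖ ^ 2 ≤ φ b
  step_pos : ∀ k, 0 < α k
  step_mul_le : ∀ k, α k * L ≤ 1
  one_le_step_mul : ∀ k, 1 ≤ α k * Λ
  start_mem : x 0 ∈ C
  succ : ∀ k, x (k + 1) = proj (x k + α k • grad (x k))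

namespace IsProjGradAscent

variable {α : ℕ → ℝ} {x : ℕ → F} (h : IsProjGradAscent φ grad L Λ C proj α x)
include h

lemma mem (k : ℕ) : x k ∈ C := by
  cases k with
  | zero => exact h.start_mem
  | succ k => exact h.succ k ▸ (h.proj_spec _).1

lemma step (k : ℕ) {z : F} (hz : z ∈ C) :
    2 * α k * (φ z - φ (x (k + 1))) ≤ ‖z - x k‖ ^ 2 - ‖z - x (k + 1)‖ ^ 2 := by
  rw [h.succ]
  exact projGradAscent_step h.convex h.proj_spec h.le_add_inner h.add_inner_sub_le
    (h.step_pos k).le (h.step_mul_le k) (x k) hz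

lemma monotone : Monotone (φ ∘ x) := by
  refine monotone_nat_of_le_succ fun k => show φ (x k) ≤ φ (x (k + 1)) from ?_
  have hstep := h.step k (h.mem k)
  rw [sub_self, norm_zero] at hstep
  nlinarith [h.step_pos k, sq_nonneg ‖x k - x (k + 1)‖]

lemma step_bound_pos : 0 < Λ :=
  pos_of_mul_pos_right (one_pos.trans_le (h.one_le_step_mul 0)) (h.step_pos 0).le

variable {z : F} (hz : z ∈ C) (hzmax : ∀ y ∈ C, φ y ≤ φ z)
include hz hzmax

lemma rate (k : ℕ) : k * (φ z - φ (x k)) ≤ Λ / 2 * (‖z - x 0‖ ^ 2 - ‖z - x k‖ ^ 2) := by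
  induction k with
  | zero => simp
  | succ k ih =>
    have hgap : 0 ≤ φ z - φ (x (k + 1)) := sub_nonneg.2 (hzmax _ (h.mem _))
    have hstep : 2 * (φ z - φ (x (k + 1))) ≤ Λ * (‖z - x k‖ ^ 2 - ‖z - x (k + 1)‖ ^ 2) :=
      calc 2 * (φ z - φ (x (k + 1))) ≤ (α k * Λ) * (2 * (φ z - φ (x (k + 1)))) :=
            le_mul_of_one_le_left (by positivity) (h.one_le_step_mul k)
        _ = Λ * (2 * α k * (φ z - φ (x (k + 1)))) := by ring
        _ ≤ _ := by gcongr; exact h.step_bound_pos.le; exact h.step k hz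
    have : (k : ℝ) * φ (x k) ≤ k * φ (x (k + 1)) :=
      mul_le_mul_of_nonneg_left (h.monotone k.le_succ) k.cast_nonneg
    push_cast
    linarith

lemma norm_sub_le (k : ℕ) : ‖z - x k‖ ≤ ‖z - x 0‖ := by
  have hrate := h.rate hz hzmax k
  have hgap : 0 ≤ (k : ℝ) * (φ z - φ (x k)) :=
    mul_nonneg k.cast_nonneg (sub_nonneg.2 (hzmax _ (h.mem k)))
  have hΛ := h.step_bound_pos
  rw [← pow_le_pow_iff_left₀ (norm_nonneg _) (norm_nonneg _) two_ne_zero]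
  nlinarith

lemma gap_le {k : ℕ} (hk : 1 ≤ k) : φ z - φ (x k) ≤ Λ * ‖z - x 0‖ ^ 2 / (2 * k) := by
  have hrate := h.rate hz hzmax k
  have hΛ := h.step_bound_pos
  have hk' : (0 : ℝ) < k := by exact_mod_cast hk
  rw [le_div_iff₀ (by positivity)]
  nlinarith [sq_nonneg ‖z - x k‖]

end IsProjGradAscent

end ProjectedGradientAscent

section Lagrangian

variable {E F : Type*} [NormedAddCommGroup E] [InnerProductSpace ℝ E]
  [NormedAddCommGroup F] [InnerProductSpace ℝ F]

def lagrangian (f : E → ℝ) (G : E →L[ℝ] F) (g : F) (u : E) (x : F) : ℝ :=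
  f u + ⟪x, -(G u) - g⟫

variable {f : E → ℝ} {G : E →L[ℝ] F} {g : F} {σ : ℝ} {U : Set E} {uu : F → E}

lemma ContinuousLinearMap.real_inner_apply_le (G : E →L[ℝ] F) (x : F) (v : E) :
    ⟪x, G v⟫ ≤ ‖x‖ * (‖G‖ * ‖v‖) :=
  (real_inner_le_norm x (G v)).trans (mul_le_mul_of_nonneg_left (G.le_opNorm v) (norm_nonneg x))

lemma lagrangian_eq_add_inner (u : E) (x y : F) :
    lagrangian f G g u y = lagrangian f G g u x + ⟪y - x, -(G u) - g⟫ := by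
  simp only [lagrangian, inner_sub_left]
  ring

lemma strongConvexOn_lagrangian (hf : StrongConvexOn Set.univ σ f) (hU : Convex ℝ U) (x : F) :
    StrongConvexOn U σ (fun u => lagrangian f G g u x) := by
  rw [strongConvexOn_iff_convex] at hf ⊢
  have haff : ConvexOn ℝ U fun u => ⟪x, -(G u)⟫ + -⟪x, g⟫ :=
    (((innerSL ℝ x).comp (-G)).toLinearMap.convexOn hU).add_const _
  refine ((hf.subset (Set.subset_univ U) hU).add haff).congr fun u _ => ?_
  simp only [lagrangian, Pi.add_apply, inner_sub_right]
  ring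

lemma lagrangian_add_sq_norm_sub_le (hf : StrongConvexOn Set.univ σ f) (hU : Convex ℝ U)
    (huu : ∀ x, uu x ∈ U ∧ ∀ u ∈ U, lagrangian f G g (uu x) x ≤ lagrangian f G g u x)
    (x : F) {u : E} (hu : u ∈ U) :
    lagrangian f G g (uu x) x + σ / 2 * ‖u - uu x‖ ^ 2 ≤ lagrangian f G g u x :=
  (strongConvexOn_lagrangian hf hU x).add_sq_norm_sub_le_of_isMinOn (isMinOn_iff.2 (huu x).2)
    (huu x).1 hu

lemma dual_le_add_inner
    (huu : ∀ x, uu x ∈ U ∧ ∀ u ∈ U, lagrangian f G g (uu x) x ≤ lagrangian f G g u x)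
    (x y : F) :
    lagrangian f G g (uu y) y ≤ lagrangian f G g (uu x) x + ⟪-(G (uu x)) - g, y - x⟫ := by
  rw [real_inner_comm, ← lagrangian_eq_add_inner]
  exact (huu y).2 _ (huu x).1

lemma add_inner_sub_sq_le_dual (hσ : 0 < σ) (hf : StrongConvexOn Set.univ σ f)
    (hU : Convex ℝ U)
    (huu : ∀ x, uu x ∈ U ∧ ∀ u ∈ U, lagrangian f G g (uu x) x ≤ lagrangian f G g u x)
    (x y : F) :
    lagrangian f G g (uu x) x + ⟪-(G (uu x)) - g, y - x⟫ - ‖G‖ ^ 2 / σ / 2 * ‖y - x‖ ^ 2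
      ≤ lagrangian f G g (uu y) y := by
  set s := ‖y - x‖
  set t := ‖uu y - uu x‖
  have hmin := lagrangian_add_sq_norm_sub_le hf hU huu x (huu y).1
  have hshift : ⟪y - x, -(G (uu y)) - g⟫ = ⟪y - x, -(G (uu x)) - g⟫ - ⟪y - x, G (uu y - uu x)⟫ := by
    rw [← inner_sub_right, map_sub]
    congr 1
    abel
  have hcross := G.real_inner_apply_le (y - x) (uu y - uu x)
  have hamgm : s * (‖G‖ * t) ≤ σ / 2 * t ^ 2 + ‖G‖ ^ 2 / σ / 2 * s ^ 2 := by
    have : 0 ≤ (σ * t - ‖G‖ * s) ^ 2 / (2 * σ) := by positivity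
    have hid : (σ * t - ‖G‖ * s) ^ 2 / (2 * σ)
        = σ / 2 * t ^ 2 + ‖G‖ ^ 2 / σ / 2 * s ^ 2 - s * (‖G‖ * t) := by
      field_simp
      ring
    linarith
  rw [lagrangian_eq_add_inner (uu y) x y, hshift, real_inner_comm]
  linarith

lemma lagrangian_le_of_mem_innerDual [CompleteSpace F] {K : Set F} {z : F}
    (hz : z ∈ ProperCone.innerDual K) {u : E} (hu : G u + g ∈ K) :
    lagrangian f G g u z ≤ f u := by
  have := (ProperCone.mem_innerDual.1 hz) hu
  rw [real_inner_comm, show G u + g = -(-(G u) - g) by abel, inner_neg_right] at this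
  simp only [lagrangian]
  linarith

lemma dual_le_of_feasible [CompleteSpace F] {K : Set F}
    (huu : ∀ x, uu x ∈ U ∧ ∀ u ∈ U, lagrangian f G g (uu x) x ≤ lagrangian f G g u x)
    {z : F} (hz : z ∈ ProperCone.innerDual K) {u : E} (hu : u ∈ U) (hfeas : G u + g ∈ K) :
    lagrangian f G g (uu z) z ≤ f u :=
  ((huu z).2 u hu).trans (lagrangian_le_of_mem_innerDual hz hfeas)

lemma sq_norm_sub_le_dual_gap [CompleteSpace F] {K : Set F} (hf : StrongConvexOn Set.univ σ f)
    (hU : Convex ℝ U)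
    (huu : ∀ x, uu x ∈ U ∧ ∀ u ∈ U, lagrangian f G g (uu x) x ≤ lagrangian f G g u x)
    {z : F} (hz : z ∈ ProperCone.innerDual K) {u : E} (hu : u ∈ U) (hfeas : G u + g ∈ K) :
    σ / 2 * ‖uu z - u‖ ^ 2 ≤ f u - lagrangian f G g (uu z) z := by
  have := lagrangian_add_sq_norm_sub_le hf hU huu z hu
  rw [norm_sub_rev] at this
  linarith [lagrangian_le_of_mem_innerDual (f := f) hz hfeas]

lemma abs_sub_le_of_dual_eq [CompleteSpace F] {K : Set F}
    (huu : ∀ x, uu x ∈ U ∧ ∀ u ∈ U, lagrangian f G g (uu x) x ≤ lagrangian f G g u x)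
    {xs : F} {ustar : E} (hxs : xs ∈ ProperCone.innerDual K)
    (hdual : lagrangian f G g (uu xs) xs = f ustar) (hustar : ustar ∈ U)
    (hfeas : G ustar + g ∈ K) (x : F) :
    |f (uu x) - f ustar| ≤ (‖x‖ + ‖xs‖) * (‖G‖ * ‖uu x - ustar‖) := by
  have hup : f (uu x) - f ustar ≤ ⟪x, G (uu x - ustar)⟫ := by
    have := (huu x).2 _ hustar
    simp only [lagrangian, map_sub, inner_sub_right, inner_neg_right] at this ⊢
    linarith
  have hlow : f ustar - f (uu x) ≤ ⟪xs, G (ustar - uu x)⟫ := by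
    have h₁ := (huu xs).2 _ (huu x).1
    have h₂ := lagrangian_le_of_mem_innerDual (f := f) hxs hfeas
    simp only [lagrangian, map_sub, inner_sub_right, inner_neg_right] at h₁ h₂ hdual ⊢
    linarith
  have h₁ := G.real_inner_apply_le x (uu x - ustar)
  have h₂ := G.real_inner_apply_le xs (ustar - uu x)
  rw [norm_sub_rev] at h₂
  have : 0 ≤ ‖G‖ * ‖uu x - ustar‖ := by positivity
  rw [abs_le]
  constructor <;> nlinarith [norm_nonneg x, norm_nonneg xs]

lemma infDist_le_opNorm_mul_norm_sub {K : Set F} {u ustar : E} (hfeas : G ustar + g ∈ K) :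
    Metric.infDist (G u + g) K ≤ ‖G‖ * ‖u - ustar‖ := by
  refine (Metric.infDist_le_dist_of_mem hfeas).trans ?_
  rw [dist_eq_norm, add_sub_add_right_eq_sub, ← map_sub]
  exact G.le_opNorm _

end Lagrangian

theorem stmt_5_general {n p : ℕ}
    (f : EuclideanSpace ℝ (Fin n) → ℝ) (σf : ℝ) (hσf : 0 < σf)
    (hfsc : StrongConvexOn Set.univ σf f)
    (U : Set (EuclideanSpace ℝ (Fin n))) (hUcv : Convex ℝ U)
    (G : EuclideanSpace ℝ (Fin n) →L[ℝ] EuclideanSpace ℝ (Fin p)) (hG : G ≠ 0) (g : EuclideanSpace ℝ (Fin p))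
    (K : Set (EuclideanSpace ℝ (Fin p)))
    (Kstar : Set (EuclideanSpace ℝ (Fin p)))
    (hKstar : Kstar = {x : EuclideanSpace ℝ (Fin p) | ∀ v ∈ K, 0 ≤ ⟪x, v⟫})
    (Lag : EuclideanSpace ℝ (Fin n) → EuclideanSpace ℝ (Fin p) → ℝ)
    (hLag : ∀ u x, Lag u x = f u + ⟪x, -(G u) - g⟫)
    (uu : EuclideanSpace ℝ (Fin p) → EuclideanSpace ℝ (Fin n))
    (huu : ∀ x : EuclideanSpace ℝ (Fin p), uu x ∈ U ∧ ∀ u ∈ U, Lag (uu x) x ≤ Lag u x)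
    (d : EuclideanSpace ℝ (Fin p) → ℝ) (hd : ∀ x, d x = Lag (uu x) x)
    (ustar : EuclideanSpace ℝ (Fin n))
    (hustar : ustar ∈ U ∧ G ustar + g ∈ K ∧ ∀ u ∈ U, G u + g ∈ K → f ustar ≤ f u)
    (fstar : ℝ) (hfstar : fstar = f ustar)
    (Xstar : Set (EuclideanSpace ℝ (Fin p))) (hXstar : Xstar = {x ∈ Kstar | d x = fstar})
    (Ld : ℝ) (hLd : Ld = ‖G‖ ^ 2 / σf)
    (projKs : EuclideanSpace ℝ (Fin p) → EuclideanSpace ℝ (Fin p))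
    (hprojKs : ∀ z : EuclideanSpace ℝ (Fin p), projKs z ∈ Kstar ∧ ∀ w ∈ Kstar, ‖z - projKs z‖ ≤ ‖z - w‖)
    (LG : ℝ) (hLG : Ld ≤ LG) (α : ℕ → ℝ)
    (hα : ∀ k, 1 / LG ≤ α k ∧ α k ≤ 1 / Ld)
    (x : ℕ → EuclideanSpace ℝ (Fin p)) (hx0K : x 0 ∈ Kstar)
    (hxrec : ∀ k, x (k + 1) = projKs (x k + α k • (-(G (uu (x k))) - g)))
    (xstar : EuclideanSpace ℝ (Fin p)) (hxstar : xstar ∈ Xstar)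
    (Rd : ℝ) (hRd : Rd = ‖x 0 - xstar‖)
 :
    ∀ k : ℕ, 1 ≤ k →
      ‖uu (x k) - ustar‖ ≤ Real.sqrt (8 * LG * Rd ^ 2 / ((k : ℝ) * σf)) ∧
      Metric.infDist (G (uu (x k)) + g) K ≤ 3 * LG * Rd / Real.sqrt (k : ℝ) ∧
      |f (uu (x k)) - fstar| ≤ (6 * Rd + 3 * ‖x 0‖) * LG * Rd / Real.sqrt (k : ℝ) := by
  intro k hk
  obtain rfl : Lag = lagrangian f G g := funext₂ hLag
  obtain rfl : d = fun x => lagrangian f G g (uu x) x := funext hd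
  obtain rfl : Kstar = ProperCone.innerDual K := by ext; simp [hKstar, real_inner_comm]
  subst hfstar hLd
  obtain ⟨hxsK, hdxs⟩ : xstar ∈ ProperCone.innerDual K ∧
      lagrangian f G g (uu xstar) xstar = f ustar := by
    simpa [hXstar] using hxstar
  have hLd : 0 < ‖G‖ ^ 2 / σf := by have := norm_pos_iff.2 hG; positivity
  have hdg : IsProjGradAscent (fun x => lagrangian f G g (uu x) x) (fun x => -(G (uu x)) - g)
      (‖G‖ ^ 2 / σf) LG (ProperCone.innerDual K) projKs α x :=
    { convex := (ProperCone.innerDual K).convex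
      proj_spec := hprojKs
      le_add_inner := dual_le_add_inner huu
      add_inner_sub_le := add_inner_sub_sq_le_dual hσf hfsc hUcv huu
      step_pos := fun k => (one_div_pos.2 (hLd.trans_le hLG)).trans_le (hα k).1
      step_mul_le := fun k => (le_div_iff₀ hLd).1 (hα k).2
      one_le_step_mul := fun k => (div_le_iff₀ (hLd.trans_le hLG)).1 (hα k).1
      start_mem := hx0K
      succ := hxrec }
  have hzmax : ∀ y ∈ ProperCone.innerDual K,
      lagrangian f G g (uu y) y ≤ lagrangian f G g (uu xstar) xstar :=
    fun y hy => (dual_le_of_feasible huu hy hustar.1 hustar.2.1).trans hdxs.ge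
  have hR : ‖xstar - x 0‖ = Rd := by rw [norm_sub_rev, hRd]
  have hgap := (sq_norm_sub_le_dual_gap hfsc hUcv huu (hdg.mem k) hustar.1 hustar.2.1).trans
    (hdxs ▸ hR ▸ hdg.gap_le hxsK hzmax hk)
  have hk' : (0 : ℝ) < k := by exact_mod_cast hk
  have hRd0 : 0 ≤ Rd := hR ▸ norm_nonneg _
  have hGerr : ‖G‖ * ‖uu (x k) - ustar‖ ≤ LG * Rd / √k :=
    mul_le_div_sqrt_of_half_mul_sq_le hσf hk' hLG (norm_nonneg G) (norm_nonneg _) hRd0 hgap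
  have hB : 0 ≤ LG * Rd / √k := (by positivity : 0 ≤ ‖G‖ * ‖uu (x k) - ustar‖).trans hGerr
  have hxs : ‖xstar‖ ≤ ‖x 0‖ + Rd := hR ▸ norm_le_norm_add_norm_sub' xstar (x 0)
  have hxk : ‖x k‖ ≤ ‖xstar‖ + Rd := by
    have := hR ▸ hdg.norm_sub_le hxsK hzmax k
    linarith [norm_le_norm_add_norm_sub' (x k) xstar, norm_sub_rev xstar (x k)]
  refine ⟨le_sqrt_of_half_mul_sq_le hσf hk' (hLd.le.trans hLG) hgap, ?_, ?_⟩
  · calc Metric.infDist (G (uu (x k)) + g) K ≤ ‖G‖ * ‖uu (x k) - ustar‖ :=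
          infDist_le_opNorm_mul_norm_sub hustar.2.1
      _ ≤ 3 * (LG * Rd / √k) := by linarith
      _ = 3 * LG * Rd / √k := by ring
  · calc |f (uu (x k)) - f ustar| ≤ (‖x k‖ + ‖xstar‖) * (‖G‖ * ‖uu (x k) - ustar‖) :=
          abs_sub_le_of_dual_eq huu hxsK hdxs hustar.1 hustar.2.1 _
      _ ≤ (6 * Rd + 3 * ‖x 0‖) * (LG * Rd / √k) :=
          mul_le_mul (by linarith [norm_nonneg (x 0)]) hGerr (by positivity) (by positivity)
      _ = (6 * Rd + 3 * ‖x 0‖) * LG * Rd / √k := by ring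

theorem stmt_5 {n p : ℕ}
    (f : EuclideanSpace ℝ (Fin n) → ℝ) (σf : ℝ) (hσf : 0 < σf)
    (hfc : Continuous f) (hfsc : StrongConvexOn Set.univ σf f)
    (U : Set (EuclideanSpace ℝ (Fin n))) (hUne : U.Nonempty) (hUcl : IsClosed U) (hUcv : Convex ℝ U)
    (G : EuclideanSpace ℝ (Fin n) →L[ℝ] EuclideanSpace ℝ (Fin p)) (hG : G ≠ 0) (g : EuclideanSpace ℝ (Fin p))
    (K : Set (EuclideanSpace ℝ (Fin p))) (hKne : K.Nonempty) (hKcl : IsClosed K) (hKcv : Convex ℝ K)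
    (hKcone : ∀ c : ℝ, 0 ≤ c → ∀ v ∈ K, c • v ∈ K)
    (Kstar : Set (EuclideanSpace ℝ (Fin p)))
    (hKstar : Kstar = {x : EuclideanSpace ℝ (Fin p) | ∀ v ∈ K, 0 ≤ ⟪x, v⟫})
    (Lag : EuclideanSpace ℝ (Fin n) → EuclideanSpace ℝ (Fin p) → ℝ)
    (hLag : ∀ u x, Lag u x = f u + ⟪x, -(G u) - g⟫)
    (uu : EuclideanSpace ℝ (Fin p) → EuclideanSpace ℝ (Fin n))
    (huu : ∀ x : EuclideanSpace ℝ (Fin p), uu x ∈ U ∧ ∀ u ∈ U, Lag (uu x) x ≤ Lag u x)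
    (d : EuclideanSpace ℝ (Fin p) → ℝ) (hd : ∀ x, d x = Lag (uu x) x)
    (ustar : EuclideanSpace ℝ (Fin n))
    (hustar : ustar ∈ U ∧ G ustar + g ∈ K ∧ ∀ u ∈ U, G u + g ∈ K → f ustar ≤ f u)
    (fstar : ℝ) (hfstar : fstar = f ustar)
    (Xstar : Set (EuclideanSpace ℝ (Fin p))) (hXstar : Xstar = {x ∈ Kstar | d x = fstar})
    (hXne : Xstar.Nonempty)
    (Ld : ℝ) (hLd : Ld = ‖G‖ ^ 2 / σf)
    (projKs : EuclideanSpace ℝ (Fin p) → EuclideanSpace ℝ (Fin p))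
    (hprojKs : ∀ z : EuclideanSpace ℝ (Fin p), projKs z ∈ Kstar ∧ ∀ w ∈ Kstar, ‖z - projKs z‖ ≤ ‖z - w‖)
    (LG : ℝ) (hLG : Ld ≤ LG) (α : ℕ → ℝ)
    (hα : ∀ k, 1 / LG ≤ α k ∧ α k ≤ 1 / Ld)
    (x : ℕ → EuclideanSpace ℝ (Fin p)) (hx0K : x 0 ∈ Kstar)
    (hxrec : ∀ k, x (k + 1) = projKs (x k + α k • (-(G (uu (x k))) - g)))
    (xstar : EuclideanSpace ℝ (Fin p)) (hxstar : xstar ∈ Xstar)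
    (hxstarmin : ∀ z ∈ Xstar, ‖x 0 - xstar‖ ≤ ‖x 0 - z‖)
    (Rd : ℝ) (hRd : Rd = ‖x 0 - xstar‖)
 :
    ∀ k : ℕ, 1 ≤ k →
      ‖uu (x k) - ustar‖ ≤ Real.sqrt (8 * LG * Rd ^ 2 / ((k : ℝ) * σf)) ∧
      Metric.infDist (G (uu (x k)) + g) K ≤ 3 * LG * Rd / Real.sqrt (k : ℝ) ∧
      |f (uu (x k)) - fstar| ≤ (6 * Rd + 3 * ‖x 0‖) * LG * Rd / Real.sqrt (k : ℝ) :=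
  stmt_5_general f σf hσf hfsc U hUcv G hG g K Kstar hKstar Lag hLag uu huu d hd ustar hustar fstar
    hfstar Xstar hXstar Ld hLd projKs hprojKs LG hLG α hα x hx0K hxrec xstar hxstar Rd hRd
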